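/- arXiv:1005.2958 — 2 statements merged into one kernel-verified Lean document; each statement's English description precedes it below -/
import Mathlib

section
/- For every element ħ of R and every formal power series V ∈ R[[x_1,…,x_r]], there exists a unique formal power series Ψ ∈ A satisfying the heat-type system ∂Ψ/∂s_{ij} = (ħ/{ij}!) · ∂²Ψ/∂x_i∂x_j for all 1 ≤ i ≤ j ≤ r, together with the initial condition Ψ|_{S=0} = V. -/
/-- Index type for the variables `s_{ij}`, `1 ≤ i ≤ j ≤ r`. -/
def SVar (r : ℕ) := {p : Fin r × Fin r // p.1 ≤ p.2}

instance {r : ℕ} : DecidableEq (SVar r) :=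
  inferInstanceAs (DecidableEq {p : Fin r × Fin r // p.1 ≤ p.2})

instance {r : ℕ} : Fintype (SVar r) :=
  inferInstanceAs (Fintype {p : Fin r × Fin r // p.1 ≤ p.2})

/-- The index of the variable `s_{ij} = s_{ji}` for arbitrary `i j`. -/
def sIdx {r : ℕ} (i j : Fin r) : SVar r :=
  if h : i ≤ j then ⟨(i, j), h⟩ else ⟨(j, i), le_of_not_ge h⟩

/-- Formal partial derivative `∂f/∂x_i` of a multivariate formal power series:
the coefficient of `∂f/∂x_i` at a monomial `m` is `(m i + 1) · (coeff of f at m + {i})`. -/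
noncomputable def pd {σ : Type*} (R : Type*) [CommSemiring R]
    (i : σ) (f : MvPowerSeries σ R) : MvPowerSeries σ R :=
  fun m => (((m i) + 1 : ℕ) : R) * MvPowerSeries.coeff (R := R) (m + Finsupp.single i 1) f

/-- Substitution of `s_{ij} = 0` for all `i ≤ j`: restriction to the `x`-variables. -/
noncomputable def resS0 {r : ℕ} {R : Type*} [CommSemiring R]
    (f : MvPowerSeries (Fin r ⊕ SVar r) R) : MvPowerSeries (Fin r) R :=
  fun m => MvPowerSeries.coeff (R := R) (Finsupp.mapDomain Sum.inl m) f

/-!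
Comparing coefficients of `x^a s^b`, the system says that `(b_p + 1)` times the coefficient at
`(a, b + e_p)` equals `c_p (a_i + 1)(a_j + 1 + δ_{ij})` times the coefficient at
`(a + e_i + e_j, b)`, where `p = (i, j)` and `c_p = ħ / {ij}!`. Over a `ℚ`-algebra this
determines every coefficient from those with `b = 0`, which gives uniqueness by induction on `b`.
For existence one checks the same recursion on the explicit coefficients of
`exp (∑ₚ c_p s_p ∂_i ∂_j) V`.
-/

open Finsupp MvPowerSeries

namespace Finsupp

variable {α : Type*}

theorem induction_add_single_one {P : (α →₀ ℕ) → Prop} (zero : P 0)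
    (add_single_one : ∀ b p, P b → P (b + single p 1)) (b : α →₀ ℕ) : P b := by
  induction b using Finsupp.induction with
  | zero => exact zero
  | single_add p n b _ hn hb =>
    clear hn
    induction n with
    | zero => simpa using hb
    | succ n ih => simpa only [single_add, add_right_comm] using add_single_one _ p ih

def factorial (a : α →₀ ℕ) : ℕ :=
  a.prod fun _ n => Nat.factorial n

theorem factorial_pos (a : α →₀ ℕ) : 0 < a.factorial :=
  Finset.prod_pos fun _ _ => Nat.factorial_pos _

theorem factorial_add_single_one (a : α →₀ ℕ) (k : α) :
    (a + single k 1).factorial = (a k + 1) * a.factorial := by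
  have h := mul_prod_erase' (a + single k 1) k (fun _ n => Nat.factorial n) fun _ => rfl
  rw [factorial, factorial, ← h, ← mul_prod_erase' a k (fun _ n => Nat.factorial n) fun _ => rfl,
    erase_add, erase_single, add_zero, add_apply, single_eq_same, Nat.factorial_succ, mul_assoc]

theorem prod_pow_add_single_one {M : Type*} [CommMonoid M] (c : α → M) (b : α →₀ ℕ) (p : α) :
    ((b + single p 1).prod fun q n => c q ^ n) = c p * b.prod fun q n => c q ^ n := by
  rw [prod_add_index' (fun _ => pow_zero _) fun _ _ _ => pow_add _ _ _,
    prod_single_index (by exact pow_zero _), pow_one, mul_comm]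

theorem sumElim_add_single_inl {β M : Type*} [AddZeroClass M] (a : α →₀ M) (b : β →₀ M) (k : α)
    (n : M) : sumElim (a + single k n) b = sumElim a b + single (Sum.inl k) n := by
  rw [← sumElim_single_zero, ← sumElim_add, add_zero]

theorem sumElim_add_single_inr {β M : Type*} [AddZeroClass M] (a : α →₀ M) (b : β →₀ M) (p : β)
    (n : M) : sumElim a (b + single p n) = sumElim a b + single (Sum.inr p) n := by
  rw [← sumElim_zero_single, ← sumElim_add, add_zero]

end Finsupp

theorem coeff_pd {σ R : Type*} [CommSemiring R] (s : σ) (f : MvPowerSeries σ R) (m : σ →₀ ℕ) :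
    coeff m (pd R s f) = ((m s + 1 : ℕ) : R) * coeff (m + single s 1) f :=
  rfl

namespace HeatEquation

variable {σ τ R : Type*} [CommRing R] (i j : τ → σ) (c : τ → R)

def IsSolution (Ψ : MvPowerSeries (σ ⊕ τ) R) : Prop :=
  ∀ p, pd R (Sum.inr p) Ψ = C (c p) * pd R (Sum.inl (i p)) (pd R (Sum.inl (j p)) Ψ)

theorem isSolution_iff (Ψ : MvPowerSeries (σ ⊕ τ) R) :
    IsSolution i j c Ψ ↔ ∀ p a b,
      ((b p + 1 : ℕ) : R) * coeff (sumElim a (b + single p 1)) Ψ =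
        c p * (((a (i p) + 1 : ℕ) : R) * ((((a + single (i p) 1 : σ →₀ ℕ) (j p) + 1 : ℕ) : R) *
          coeff (sumElim (a + single (i p) 1 + single (j p) 1) b) Ψ)) := by
  refine forall_congr' fun p => ?_
  rw [MvPowerSeries.ext_iff]
  have hcoeff : ∀ a b, coeff (sumElim a b) (pd R (Sum.inr p) Ψ) =
      coeff (sumElim a b) (C (c p) * pd R (Sum.inl (i p)) (pd R (Sum.inl (j p)) Ψ)) ↔
      ((b p + 1 : ℕ) : R) * coeff (sumElim a (b + single p 1)) Ψ =
        c p * (((a (i p) + 1 : ℕ) : R) * ((((a + single (i p) 1 : σ →₀ ℕ) (j p) + 1 : ℕ) : R) *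
          coeff (sumElim (a + single (i p) 1 + single (j p) 1) b) Ψ)) :=
    fun a b => by
      rw [coeff_C_mul, coeff_pd, coeff_pd, coeff_pd, sumElim_add_single_inl, sumElim_add_single_inl,
        sumElim_add_single_inr, sumElim_inl, sumElim_inr, ← sumElim_add_single_inl, sumElim_inl]
  constructor
  · exact fun h a b => (hcoeff a b).1 (h _)
  · intro h m
    rw [← comapDomain_sumElim_comapDomain m]
    exact (hcoeff _ _).2 (h _ _)

section Solution

variable [Algebra ℚ R]

/-- The coefficient of `x^a s^b` in `exp (∑ₚ c p • sₚ ∂_{i p} ∂_{j p}) V`. -/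
noncomputable def solutionCoeff (V : MvPowerSeries σ R) (a : σ →₀ ℕ) (b : τ →₀ ℕ) : R :=
  ((a + b.mapDomain i + b.mapDomain j).factorial / (a.factorial * b.factorial) : ℚ) •
    ((b.prod fun p n => c p ^ n) * coeff (a + b.mapDomain i + b.mapDomain j) V)

theorem solutionCoeff_zero_right (V : MvPowerSeries σ R) (a : σ →₀ ℕ) :
    solutionCoeff i j c V a 0 = coeff a V := by
  have ha₀ : (a.factorial : ℚ) ≠ 0 := by exact_mod_cast (factorial_pos a).ne'
  simp only [solutionCoeff, mapDomain_zero, add_zero, prod_zero_index, one_mul]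
  rw [show (Finsupp.factorial (0 : τ →₀ ℕ) : ℚ) = 1 by simp [factorial], mul_one, div_self ha₀,
    one_smul]

theorem solutionCoeff_add_single (V : MvPowerSeries σ R) (a : σ →₀ ℕ) (b : τ →₀ ℕ) (p : τ) :
    ((b p + 1 : ℕ) : R) * solutionCoeff i j c V a (b + single p 1) =
      c p * (((a (i p) + 1 : ℕ) : R) * ((((a + single (i p) 1 : σ →₀ ℕ) (j p) + 1 : ℕ) : R) *
        solutionCoeff i j c V (a + single (i p) 1 + single (j p) 1) b)) := by
  set a' := a + single (i p) 1 + single (j p) 1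
  set k := a' + b.mapDomain i + b.mapDomain j
  have hk : a + (b + single p 1).mapDomain i + (b + single p 1).mapDomain j = k := by
    simp only [k, a', mapDomain_add, mapDomain_single]; abel
  have ha' : (a'.factorial : ℚ) =
      ((a + single (i p) 1 : σ →₀ ℕ) (j p) + 1) * ((a (i p) + 1) * a.factorial) := by
    simp only [a', factorial_add_single_one, Finsupp.add_apply]; push_cast; ring
  have hb : ((b + single p 1).factorial : ℚ) = (b p + 1) * b.factorial := by
    rw [factorial_add_single_one]; push_cast; ring
  have hq : ((b p + 1 : ℕ) : ℚ) * (k.factorial / (a.factorial * (b + single p 1).factorial)) =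
      ((a (i p) + 1 : ℕ) : ℚ) * (((a + single (i p) 1 : σ →₀ ℕ) (j p) + 1 : ℕ) : ℚ) *
        (k.factorial / (a'.factorial * b.factorial)) := by
    have ha₀ := factorial_pos a
    have hb₀ := factorial_pos b
    rw [ha', hb]; push_cast; field_simp
  have hq' := congrArg (algebraMap ℚ R) hq
  simp only [map_mul, map_natCast] at hq'
  simp only [solutionCoeff, hk, prod_pow_add_single_one, Algebra.smul_def]
  linear_combination
    (c p * (b.prod fun p n => c p ^ n) * coeff k V) * hq'

noncomputable def solution (V : MvPowerSeries σ R) : MvPowerSeries (σ ⊕ τ) R :=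
  fun m => solutionCoeff i j c V (m.comapDomain Sum.inl Sum.inl_injective.injOn)
    (m.comapDomain Sum.inr Sum.inr_injective.injOn)

theorem coeff_solution_sumElim (V : MvPowerSeries σ R) (a : σ →₀ ℕ) (b : τ →₀ ℕ) :
    coeff (sumElim a b) (solution i j c V) = solutionCoeff i j c V a b := by
  rw [coeff_apply, solution, comapDomain_inl_sumElim, comapDomain_inr_sumElim]

theorem isSolution_solution (V : MvPowerSeries σ R) : IsSolution i j c (solution i j c V) := by
  rw [isSolution_iff]
  intro p a b
  simp only [coeff_solution_sumElim, solutionCoeff_add_single]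

theorem coeff_solution_mapDomain_inl (V : MvPowerSeries σ R) (a : σ →₀ ℕ) :
    coeff (a.mapDomain Sum.inl) (solution i j c V) = coeff a V := by
  rw [← solutionCoeff_zero_right i j c, ← coeff_solution_sumElim, sumElim_eq_add, mapDomain_zero,
    add_zero]

theorem eq_of_isSolution {Ψ Φ : MvPowerSeries (σ ⊕ τ) R} (hΨ : IsSolution i j c Ψ)
    (hΦ : IsSolution i j c Φ)
    (h : ∀ a : σ →₀ ℕ, coeff (a.mapDomain Sum.inl) Ψ = coeff (a.mapDomain Sum.inl) Φ) :
    Ψ = Φ := by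
  suffices H : ∀ b a, coeff (sumElim a b) Ψ = coeff (sumElim a b) Φ by
    ext m
    rw [← comapDomain_sumElim_comapDomain m]
    exact H _ _
  intro b
  induction b using induction_add_single_one with
  | zero => simpa only [sumElim_eq_add, mapDomain_zero, add_zero] using h
  | add_single_one b p ih =>
    intro a
    have hunit : IsUnit ((b p + 1 : ℕ) : R) := by
      simpa using (IsUnit.mk0 ((b p + 1 : ℕ) : ℚ) (by positivity)).map (algebraMap ℚ R)
    apply hunit.mul_left_cancel
    rw [(isSolution_iff i j c Ψ).1 hΨ, (isSolution_iff i j c Φ).1 hΦ, ih]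

theorem existsUnique_isSolution (V : MvPowerSeries σ R) :
    ∃! Ψ, IsSolution i j c Ψ ∧ ∀ a : σ →₀ ℕ, coeff (a.mapDomain Sum.inl) Ψ = coeff a V :=
  ⟨solution i j c V, ⟨isSolution_solution i j c V, coeff_solution_mapDomain_inl i j c V⟩,
    fun _ ⟨hΨ, hV⟩ => eq_of_isSolution i j c hΨ (isSolution_solution i j c V) fun a => by
      rw [hV, coeff_solution_mapDomain_inl]⟩

end Solution

end HeatEquation

theorem sIdx_of_le {r : ℕ} {i j : Fin r} (h : i ≤ j) : sIdx i j = ⟨(i, j), h⟩ :=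
  dif_pos h

theorem resS0_eq_iff {r : ℕ} {R : Type*} [CommSemiring R] (Ψ : MvPowerSeries (Fin r ⊕ SVar r) R)
    (V : MvPowerSeries (Fin r) R) :
    resS0 Ψ = V ↔ ∀ a : Fin r →₀ ℕ, coeff (a.mapDomain Sum.inl) Ψ = coeff a V :=
  MvPowerSeries.ext_iff

theorem forall_pd_sIdx_iff_isSolution {r : ℕ} {R : Type*} [CommRing R] [Algebra ℚ R] (hbar : R)
    (Ψ : MvPowerSeries (Fin r ⊕ SVar r) R) :
    (∀ i j : Fin r, i ≤ j →
        pd R (Sum.inr (sIdx i j)) Ψ =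
          (if i = j then (2 : ℚ)⁻¹ else 1) • (C hbar * pd R (Sum.inl i) (pd R (Sum.inl j) Ψ))) ↔
      HeatEquation.IsSolution (fun p : SVar r => p.1.1) (fun p => p.1.2)
        (fun p => (if p.1.1 = p.1.2 then (2 : ℚ)⁻¹ else 1) • hbar) Ψ := by
  simp only [HeatEquation.IsSolution, ← smul_mul_assoc, ← map_rat_smul]
  constructor
  · rintro h ⟨⟨i, j⟩, hij⟩
    simpa only [sIdx_of_le hij] using h i j hij
  · intro h i j hij
    rw [sIdx_of_le hij]
    exact h ⟨(i, j), hij⟩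

theorem stmt0_general {r : ℕ} (R : Type*) [CommRing R] [Algebra ℚ R]
    (hbar : R) (V : MvPowerSeries (Fin r) R) :
    ∃! Ψ : MvPowerSeries (Fin r ⊕ SVar r) R,
      (∀ i j : Fin r, i ≤ j →
        pd R (Sum.inr (sIdx i j)) Ψ =
          (if i = j then (2 : ℚ)⁻¹ else 1) •
            (MvPowerSeries.C (σ := Fin r ⊕ SVar r) (R := R) hbar *
              pd R (Sum.inl i) (pd R (Sum.inl j) Ψ))) ∧
      resS0 Ψ = V := by
  simp only [forall_pd_sIdx_iff_isSolution, resS0_eq_iff]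
  exact HeatEquation.existsUnique_isSolution _ _ _ V

/-- For every `ħ ∈ R` and every `V ∈ R[[x_1,…,x_r]]` there is a unique
formal power series `Ψ ∈ R[[x; s]]` with `∂Ψ/∂s_{ij} = (ħ/{ij}!)·∂²Ψ/∂x_i∂x_j`
for all `i ≤ j`, and `Ψ|_{S=0} = V`. -/
theorem stmt0 {r : ℕ} (hr : 1 ≤ r) (R : Type*) [CommRing R] [Algebra ℚ R]
    (hbar : R) (V : MvPowerSeries (Fin r) R) :
    ∃! Ψ : MvPowerSeries (Fin r ⊕ SVar r) R,
      (∀ i j : Fin r, i ≤ j →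
        pd R (Sum.inr (sIdx i j)) Ψ =
          (if i = j then (2 : ℚ)⁻¹ else 1) •
            (MvPowerSeries.C (σ := Fin r ⊕ SVar r) (R := R) hbar *
              pd R (Sum.inl i) (pd R (Sum.inl j) Ψ))) ∧
      resS0 Ψ = V :=
  stmt0_general R hbar V
end

section
/- Let U₀ ∈ R[[x_1,…,x_r]], let F_i := ∂U₀/∂x_i, let H(X) be the Hessian matrix (∂²U₀/∂x_i∂x_j)_{i,j}, and let Φ = (Φ_1,…,Φ_r) be the unique r-tuple of elements of A satisfying Φ_m = F_m(X + SΦ) for all m, where X + SΦ = (x_i + Σ_j s_{ij}Φ_j)_i. Let Θ be the r×r matrix over A with entries Θ_{ij} := ∂Φ_i/∂x_j, let S denote the matrix (s_{ij}), and let H(X+SΦ) denote the matrix obtained by substituting the tuple X+SΦ into each entry of H. Then (E + SΘ)·(E − S·H(X+SΦ)) = E and (E − S·H(X+SΦ))·(E + SΘ) = E, where E is the r×r identity matrix over A; i.e. E + SΘ is the inverse of E − S·H(X+SΦ). -/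
/-- Total degree of a monomial. -/
def mdeg {σ : Type*} (m : σ →₀ ℕ) : ℕ := m.sum fun _ e => e

/-- Formal substitution `F(G) = Σ_m (coeff_m F) · ∏_i G_i^{m_i}`, for tuples `G` whose
components have zero constant coefficient, computed coefficientwise: since
`∏ G_i^{m_i}` has order `≥ |m|`, only multi-indices `m` with `|m| ≤ deg μ` (in
particular `m ≤ (deg μ, …, deg μ)`) contribute to the coefficient at `μ`. -/
noncomputable def substT {σ τ R : Type*} [Fintype σ] [DecidableEq σ] [CommRing R]
    (F : MvPowerSeries σ R) (G : σ → MvPowerSeries τ R) : MvPowerSeries τ R :=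
  fun μ => MvPowerSeries.coeff (R := R) μ
    (∑ m ∈ Finset.Iic (Finsupp.equivFunOnFinite.symm (fun _ : σ => mdeg μ)),
      MvPowerSeries.coeff (R := R) m F • ∏ i, (G i) ^ (m i))

/-- The tuple `(X + SΦ)_i = x_i + Σ_j s_{ij}·Φ_j`. -/
noncomputable def xsPhi {r : ℕ} {R : Type*} [CommRing R]
    (Φ : Fin r → MvPowerSeries (Fin r ⊕ SVar r) R) (i : Fin r) :
    MvPowerSeries (Fin r ⊕ SVar r) R :=
  MvPowerSeries.X (Sum.inl i) +
    ∑ j, MvPowerSeries.X (Sum.inr (sIdx i j)) * Φ j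

/-- The matrix `S = (s_{ij})` over `A`. -/
noncomputable def sMat (r : ℕ) (R : Type*) [CommRing R] :
    Matrix (Fin r) (Fin r) (MvPowerSeries (Fin r ⊕ SVar r) R) :=
  fun i j => MvPowerSeries.X (Sum.inr (sIdx i j))

open MvPowerSeries

section PartialDerivative

variable {σ R : Type*} [CommSemiring R]

theorem pd_eq_pderiv (i : σ) (f : MvPowerSeries σ R) : pd R i f = pderiv R i f := by
  ext m
  rw [coeff_pderiv, mul_comm, ← Nat.cast_succ]
  rfl

theorem MvPowerSeries.pderiv_comm (i j : σ) (f : MvPowerSeries σ R) :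
    pderiv R i (pderiv R j f) = pderiv R j (pderiv R i f) := by
  classical
  ext n
  simp only [coeff_pderiv, add_right_comm n (Finsupp.single i 1)]
  rcases eq_or_ne i j with rfl | hij
  · rfl
  · simp [hij, hij.symm, mul_right_comm]

end PartialDerivative

theorem Derivation.map_mvPolynomial_aeval {σ R A : Type*} [Fintype σ] [DecidableEq σ]
    [CommSemiring R] [CommSemiring A] [Algebra R A] (D : Derivation R A A) (x : σ → A)
    (P : MvPolynomial σ R) :
    D (MvPolynomial.aeval x P) =
      ∑ i, MvPolynomial.aeval x (MvPolynomial.pderiv i P) * D (x i) := by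
  induction P using MvPolynomial.induction_on with
  | C a => simp
  | add p q hp hq => simp [hp, hq, add_mul, Finset.sum_add_distrib]
  | mul_X p j ih =>
    simp only [map_mul, MvPolynomial.aeval_X, Derivation.leibniz, ih, MvPolynomial.pderiv_X,
      smul_eq_mul, map_add, add_mul, Finset.sum_add_distrib, Finset.mul_sum, Pi.single_apply]
    simp [mul_comm, mul_left_comm]

theorem mdeg_eq_degree {σ : Type*} (m : σ →₀ ℕ) : mdeg m = m.degree := rfl

theorem MvPowerSeries.coeff_prod_pow_eq_zero_of_degree_lt {σ τ R : Type*} [Fintype σ]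
    [CommSemiring R] {G : σ → MvPowerSeries τ R} (hG : ∀ i, constantCoeff (G i) = 0)
    {m : σ →₀ ℕ} {μ : τ →₀ ℕ} (h : μ.degree < m.degree) :
    coeff μ (∏ i, G i ^ m i) = 0 := by
  apply coeff_of_lt_order
  calc (μ.degree : ℕ∞) < m.degree := by exact_mod_cast h
    _ = ∑ i, (m i : ℕ∞) := by rw [Finsupp.degree_eq_sum]; push_cast; rfl
    _ ≤ ∑ i, (G i ^ m i).order :=
      Finset.sum_le_sum fun i _ => le_order_pow_of_constantCoeff_eq_zero _ (hG i)
    _ ≤ _ := le_order_prod _ _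

theorem MvPowerSeries.coeff_mul_congr_left {σ R : Type*} [CommSemiring R]
    {f f' : MvPowerSeries σ R} (g : MvPowerSeries σ R) {μ : σ →₀ ℕ}
    (h : ∀ a ≤ μ, coeff a f = coeff a f') : coeff μ (f * g) = coeff μ (f' * g) := by
  classical
  rw [coeff_mul, coeff_mul]
  refine Finset.sum_congr rfl fun p hp => ?_
  rw [h p.1 (Finset.HasAntidiagonal.mem_antidiagonal.mp hp ▸ le_self_add)]

section Substitution

variable {σ τ R : Type*} [Fintype σ] [DecidableEq σ] [CommRing R]

theorem mem_Iic_equivFunOnFinite_symm_const {m : σ →₀ ℕ} {N : ℕ} :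
    m ∈ Finset.Iic (Finsupp.equivFunOnFinite.symm fun _ : σ => N) ↔ ∀ i, m i ≤ N := by
  simp [Finsupp.le_def]

theorem coeff_substT (F : MvPowerSeries σ R) (G : σ → MvPowerSeries τ R) (μ : τ →₀ ℕ) :
    coeff μ (substT F G) = ∑ m ∈ Finset.Iic (Finsupp.equivFunOnFinite.symm fun _ => μ.degree),
      coeff m F * coeff μ (∏ i, G i ^ m i) := by
  change coeff μ (∑ m ∈ _, _) = _
  simp only [map_sum, coeff_smul, mdeg_eq_degree]

theorem coeff_substT_congr {F F' : MvPowerSeries σ R} (G : σ → MvPowerSeries τ R)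
    {μ : τ →₀ ℕ}
    (h : ∀ m : σ →₀ ℕ, (∀ i, m i ≤ μ.degree) → coeff m F = coeff m F') :
    coeff μ (substT F G) = coeff μ (substT F' G) := by
  rw [coeff_substT, coeff_substT]
  refine Finset.sum_congr rfl fun m hm => ?_
  rw [h m (mem_Iic_equivFunOnFinite_symm_const.mp hm)]

variable {G : σ → MvPowerSeries τ R}

theorem coeff_substT_eq_sum_of_subset (hG : ∀ i, constantCoeff (G i) = 0)
    (F : MvPowerSeries σ R) {μ : τ →₀ ℕ} {s : Finset (σ →₀ ℕ)}
    (hs : ∀ m : σ →₀ ℕ, (∀ i, m i ≤ μ.degree) → m ∈ s) :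
    coeff μ (substT F G) = ∑ m ∈ s, coeff m F * coeff μ (∏ i, G i ^ m i) := by
  rw [coeff_substT]
  refine Finset.sum_subset (fun m hm => hs m (mem_Iic_equivFunOnFinite_symm_const.mp hm))
    fun m _ hm => ?_
  rw [mem_Iic_equivFunOnFinite_symm_const] at hm
  simp only [not_forall, not_le] at hm
  obtain ⟨i, hi⟩ := hm
  rw [coeff_prod_pow_eq_zero_of_degree_lt hG (hi.trans_le (Finsupp.le_degree i m)), mul_zero]

theorem substT_coe (hG : ∀ i, constantCoeff (G i) = 0) (P : MvPolynomial σ R) :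
    substT (P : MvPowerSeries σ R) G = MvPolynomial.aeval G P := by
  classical
  ext μ
  set B := Finset.Iic (Finsupp.equivFunOnFinite.symm fun _ : σ => μ.degree)
  rw [coeff_substT_eq_sum_of_subset hG _ (s := P.support ∪ B)
    fun m hm => Finset.mem_union_right _ (mem_Iic_equivFunOnFinite_symm_const.mpr hm),
    MvPolynomial.aeval_def, MvPolynomial.eval₂_eq', map_sum]
  simp only [← Algebra.smul_def, coeff_smul, MvPolynomial.coeff_coe]
  exact (Finset.sum_subset Finset.subset_union_left fun m _ hm => by
    rw [MvPolynomial.notMem_support_iff.mp hm, zero_mul]).symm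

theorem pderiv_substT (hG : ∀ i, constantCoeff (G i) = 0) (F : MvPowerSeries σ R) (t : τ) :
    pderiv R t (substT F G) = ∑ i, substT (pderiv R i F) G * pderiv R t (G i) := by
  classical
  ext μ
  -- only the coefficients of `F` in the box `m ≤ (|μ| + 1, …, |μ| + 1)` matter
  set P := trunc' R (Finsupp.equivFunOnFinite.symm fun _ : σ => μ.degree + 1) F
  have hP (m : σ →₀ ℕ) (hm : ∀ i, m i ≤ μ.degree + 1) :
      coeff m (P : MvPowerSeries σ R) = coeff m F := by
    rw [MvPolynomial.coeff_coe, coeff_trunc',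
      if_pos (Finset.mem_Iic.mp (mem_Iic_equivFunOnFinite_symm_const.mpr hm))]
  have hlhs : coeff μ (pderiv R t (substT F G)) = coeff μ (pderiv R t (substT P G)) := by
    rw [coeff_pderiv, coeff_pderiv, coeff_substT_congr G fun m hm => (hP m ?_).symm]
    simpa using hm
  have hrhs (i : σ) : coeff μ (substT (pderiv R i F) G * pderiv R t (G i)) =
      coeff μ (substT (pderiv R i P) G * pderiv R t (G i)) := by
    refine coeff_mul_congr_left _ fun a ha => coeff_substT_congr G fun m hm => ?_
    rw [coeff_pderiv, coeff_pderiv, hP]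
    intro j
    have hdeg : a.degree ≤ μ.degree := Finsupp.degree_mono ha
    have hmj := hm j
    rw [Finsupp.add_apply, Finsupp.single_apply]
    split_ifs <;> omega
  simp only [hlhs, map_sum, hrhs, pderiv_coe, substT_coe hG,
    Derivation.map_mvPolynomial_aeval]

end Substitution

theorem Matrix.inverse_pair_of_eq_mul_one_add_mul {n α : Type*} [Fintype n] [DecidableEq n]
    [CommRing α] {S H Θ : Matrix n n α} (h : Θ = H * (1 + S * Θ)) :
    (1 + S * Θ) * (1 - S * H) = 1 ∧ (1 - S * H) * (1 + S * Θ) = 1 := by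
  have right : (1 - S * H) * (1 + S * Θ) = 1 := by
    rw [sub_mul, one_mul, Matrix.mul_assoc, ← h, add_sub_cancel_right]
  exact ⟨mul_eq_one_comm.mpr right, right⟩

section Jacobian

variable {r : ℕ} {R : Type*} [CommRing R] (Φ : Fin r → MvPowerSeries (Fin r ⊕ SVar r) R)

theorem constantCoeff_xsPhi (k : Fin r) : constantCoeff (xsPhi Φ k) = 0 := by
  simp [xsPhi]

theorem pderiv_inl_xsPhi (k j : Fin r) :
    pderiv R (Sum.inl j) (xsPhi Φ k) =
      (1 + sMat r R * Matrix.of fun i j => pderiv R (Sum.inl j) (Φ i)) k j := by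
  simp [xsPhi, sMat, Matrix.mul_apply, Matrix.one_apply, Derivation.leibniz, pderiv_X,
    Pi.single_apply, eq_comm]

theorem jacobian_eq_hessian_mul (U₀ : MvPowerSeries (Fin r) R)
    (hΦ : ∀ m, Φ m = substT (pderiv R m U₀) (xsPhi Φ)) :
    Matrix.of (fun i j => pderiv R (Sum.inl j) (Φ i)) =
      Matrix.of (fun i j => substT (pderiv R i (pderiv R j U₀)) (xsPhi Φ)) *
        (1 + sMat r R * Matrix.of fun i j => pderiv R (Sum.inl j) (Φ i)) := by
  ext i j
  rw [Matrix.of_apply, hΦ i, pderiv_substT (constantCoeff_xsPhi Φ), Matrix.mul_apply]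
  simp only [pderiv_inl_xsPhi, Matrix.of_apply, pderiv_comm]

end Jacobian

theorem stmt7_general {r : ℕ} (R : Type*) [CommRing R]
    (U₀ : MvPowerSeries (Fin r) R)
    (Φ : Fin r → MvPowerSeries (Fin r ⊕ SVar r) R)
    (hΦ : ∀ m, Φ m = substT (pd R m U₀) (xsPhi Φ)) :
    (1 + sMat r R * Matrix.of (fun i j => pd R (Sum.inl j) (Φ i))) *
        (1 - sMat r R * Matrix.of (fun i j => substT (pd R i (pd R j U₀)) (xsPhi Φ))) = 1 ∧
    (1 - sMat r R * Matrix.of (fun i j => substT (pd R i (pd R j U₀)) (xsPhi Φ))) *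
        (1 + sMat r R * Matrix.of (fun i j => pd R (Sum.inl j) (Φ i))) = 1 := by
  simp only [pd_eq_pderiv] at hΦ ⊢
  exact Matrix.inverse_pair_of_eq_mul_one_add_mul (jacobian_eq_hessian_mul Φ U₀ hΦ)

/-- Let `F_i = ∂U₀/∂x_i`, `H = (∂²U₀/∂x_i∂x_j)`, and let `Φ` solve
`Φ_m = F_m(X+SΦ)`.  With `Θ_{ij} = ∂Φ_i/∂x_j`, the matrix `E + SΘ` is a two-sided
inverse of `E − S·H(X+SΦ)`. -/
theorem stmt7 {r : ℕ} (hr : 1 ≤ r) (R : Type*) [CommRing R] [Algebra ℚ R]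
    (U₀ : MvPowerSeries (Fin r) R)
    (Φ : Fin r → MvPowerSeries (Fin r ⊕ SVar r) R)
    (hΦ : ∀ m, Φ m = substT (pd R m U₀) (xsPhi Φ)) :
    (1 + sMat r R * Matrix.of (fun i j => pd R (Sum.inl j) (Φ i))) *
        (1 - sMat r R * Matrix.of (fun i j => substT (pd R i (pd R j U₀)) (xsPhi Φ))) = 1 ∧
    (1 - sMat r R * Matrix.of (fun i j => substT (pd R i (pd R j U₀)) (xsPhi Φ))) *
        (1 + sMat r R * Matrix.of (fun i j => pd R (Sum.inl j) (Φ i))) = 1 :=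
  stmt7_general R U₀ Φ hΦ
end
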